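/- Decomposition of the Lasso over independent groups: suppose the index set {1,…,m} is partitioned into groups G₁, …, G_q such that H_iᵀ H_j = 0 whenever i and j belong to different groups. Then a ∈ ℝ^m minimizes (1/2)‖y − Ha‖₂² + λ‖a‖₁ if and only if for each group G_l, the restriction a_{G_l} minimizes (1/2)‖y − H_{G_l} a_{G_l}‖₂² + λ‖a_{G_l}‖₁. -/
import Mathlib


open Finset

/-- Restriction of a vector to a set of indices (zero outside). -/
def restrictTo {m : ℕ} (G : Finset (Fin m)) (a : Fin m → ℝ) : Fin m → ℝ :=
  fun j => if j ∈ G then a j else 0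

section Aux

variable {p m q : ℕ} (H : Matrix (Fin p) (Fin m) ℝ) (y : Fin p → ℝ)
  (G : Fin q → Finset (Fin m))

lemma sum_partition (hcover : ∀ j : Fin m, ∃ l : Fin q, j ∈ G l)
    (hdisj : ∀ l l' : Fin q, l ≠ l' → Disjoint (G l) (G l')) (g : Fin m → ℝ) :
    ∑ j, g j = ∑ l, ∑ j ∈ G l, g j := by
  rw [← Finset.sum_biUnion (by intro l _ l' _ h; exact hdisj l l' h)]
  apply Finset.sum_congr _ (fun _ _ => rfl)
  ext j
  simp [Finset.mem_biUnion, hcover j]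

lemma restrict_sum (hcover : ∀ j : Fin m, ∃ l : Fin q, j ∈ G l)
    (hdisj : ∀ l l' : Fin q, l ≠ l' → Disjoint (G l) (G l'))
    (x : Fin m → ℝ) (j : Fin m) :
    ∑ l, restrictTo (G l) x j = x j := by
  obtain ⟨l₀, hl₀⟩ := hcover j
  rw [Finset.sum_eq_single l₀]
  · simp [restrictTo, hl₀]
  · intro l _ hne
    simp only [restrictTo]
    rw [if_neg]
    intro hj
    exact Finset.disjoint_left.mp (hdisj l l₀ hne) hj hl₀
  · simp

lemma orth_mulVec
    (horth : ∀ l l' : Fin q, l ≠ l' → ∀ i ∈ G l, ∀ j ∈ G l',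
      ∑ s, H s i * H s j = 0)
    {l l' : Fin q} (hne : l ≠ l') (u v : Fin m → ℝ)
    (hu : ∀ j ∉ G l, u j = 0) (hv : ∀ j ∉ G l', v j = 0) :
    ∑ i, H.mulVec u i * H.mulVec v i = 0 := by
  simp only [Matrix.mulVec, dotProduct]
  calc ∑ i, (∑ j, H i j * u j) * (∑ k, H i k * v k)
      = ∑ j, ∑ k, (u j * v k) * (∑ i, H i j * H i k) := by
        simp only [Finset.sum_mul_sum]
        rw [Finset.sum_comm]
        apply Finset.sum_congr rfl; intro j _
        rw [Finset.sum_comm]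
        apply Finset.sum_congr rfl; intro k _
        rw [Finset.mul_sum]
        apply Finset.sum_congr rfl; intro i _
        ring
    _ = 0 := by
        apply Finset.sum_eq_zero; intro j _
        apply Finset.sum_eq_zero; intro k _
        by_cases hj : j ∈ G l
        · by_cases hk : k ∈ G l'
          · rw [horth l l' hne j hj k hk, mul_zero]
          · rw [hv k hk, mul_zero, zero_mul]
        · rw [hu j hj, zero_mul, zero_mul]

lemma mulVec_restrict_sum (hcover : ∀ j : Fin m, ∃ l : Fin q, j ∈ G l)
    (hdisj : ∀ l l' : Fin q, l ≠ l' → Disjoint (G l) (G l'))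
    (x : Fin m → ℝ) (i : Fin p) :
    ∑ l, H.mulVec (restrictTo (G l) x) i = H.mulVec x i := by
  simp only [Matrix.mulVec, dotProduct]
  rw [Finset.sum_comm]
  apply Finset.sum_congr rfl; intro j _
  rw [← Finset.mul_sum, restrict_sum G hcover hdisj x j]

lemma key_decomp (hcover : ∀ j : Fin m, ∃ l : Fin q, j ∈ G l)
    (hdisj : ∀ l l' : Fin q, l ≠ l' → Disjoint (G l) (G l'))
    (horth : ∀ l l' : Fin q, l ≠ l' → ∀ i ∈ G l, ∀ j ∈ G l',
      ∑ s, H s i * H s j = 0)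
    (lam : ℝ) (x : Fin m → ℝ) :
    (1/2) * ∑ i, (y i - H.mulVec x i)^2 + lam * ∑ j, |x j|
      + ((q : ℝ) - 1) * ((1/2) * ∑ i, (y i)^2)
    = ∑ l, ((1/2) * ∑ i, (y i - H.mulVec (restrictTo (G l) x) i)^2
            + lam * ∑ j ∈ G l, |x j|) := by
  have expand : ∀ w : Fin p → ℝ, ∑ i, (y i - w i)^2
      = (∑ i, (y i)^2) - 2 * (∑ i, y i * w i) + ∑ i, (w i)^2 := by
    intro w
    rw [Finset.mul_sum, ← Finset.sum_sub_distrib, ← Finset.sum_add_distrib]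
    apply Finset.sum_congr rfl; intro i _; ring
  set v : Fin q → Fin p → ℝ := fun l => H.mulVec (restrictTo (G l) x) with hv
  -- cross term
  have hcross : ∑ l, ∑ i, y i * v l i = ∑ i, y i * H.mulVec x i := by
    rw [Finset.sum_comm]
    apply Finset.sum_congr rfl; intro i _
    rw [← Finset.mul_sum, mulVec_restrict_sum H G hcover hdisj x i]
  -- quadratic term
  have hquad : ∑ l, ∑ i, (v l i)^2 = ∑ i, (H.mulVec x i)^2 := by
    have h1 : ∀ i, H.mulVec x i = ∑ l, v l i := by
      intro i; rw [← mulVec_restrict_sum H G hcover hdisj x i]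
    calc ∑ l, ∑ i, (v l i)^2
        = ∑ l, ∑ l', ∑ i, v l i * v l' i := by
          apply Finset.sum_congr rfl; intro l _
          rw [Finset.sum_eq_single l]
          · apply Finset.sum_congr rfl; intro i _; ring
          · intro l' _ hne
            exact orth_mulVec H G horth (Ne.symm hne) _ _
              (fun j hj => by simp [restrictTo, hj])
              (fun j hj => by simp [restrictTo, hj])
          · simp
      _ = ∑ i, (H.mulVec x i)^2 := by
          symm
          calc ∑ i, (H.mulVec x i)^2
              = ∑ i, ∑ l, ∑ l', v l i * v l' i := by
                apply Finset.sum_congr rfl; intro i _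
                rw [h1 i, sq, Finset.sum_mul_sum]
            _ = ∑ l, ∑ l', ∑ i, v l i * v l' i := by
                rw [Finset.sum_comm]
                apply Finset.sum_congr rfl; intro l _
                rw [Finset.sum_comm]
  -- ℓ1 term
  have hl1 : ∑ j, |x j| = ∑ l, ∑ j ∈ G l, |x j| :=
    sum_partition G hcover hdisj (fun j => |x j|)
  have hconst : ∑ l : Fin q, ∑ i, (y i)^2 = (q : ℝ) * ∑ i, (y i)^2 := by
    rw [Finset.sum_const, Finset.card_univ, Fintype.card_fin, nsmul_eq_mul]
  calc (1/2) * ∑ i, (y i - H.mulVec x i)^2 + lam * ∑ j, |x j|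
        + ((q : ℝ) - 1) * ((1/2) * ∑ i, (y i)^2)
      = (1/2) * ((∑ i, (y i)^2) - 2 * (∑ i, y i * H.mulVec x i)
          + ∑ i, (H.mulVec x i)^2) + lam * ∑ j, |x j|
        + ((q : ℝ) - 1) * ((1/2) * ∑ i, (y i)^2) := by rw [expand]
    _ = (1/2) * ((q : ℝ) * (∑ i, (y i)^2) - 2 * (∑ l, ∑ i, y i * v l i)
          + ∑ l, ∑ i, (v l i)^2) + lam * ∑ l, ∑ j ∈ G l, |x j| := by
        rw [hcross, hquad, hl1]; ring
    _ = ∑ l, ((1/2) * ∑ i, (y i - v l i)^2 + lam * ∑ j ∈ G l, |x j|) := by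
        symm
        calc ∑ l, ((1/2) * ∑ i, (y i - v l i)^2 + lam * ∑ j ∈ G l, |x j|)
            = ∑ l, ((1/2) * ((∑ i, (y i)^2) - 2 * (∑ i, y i * v l i)
                + ∑ i, (v l i)^2) + lam * ∑ j ∈ G l, |x j|) := by
              apply Finset.sum_congr rfl; intro l _; rw [expand]
          _ = (1/2) * ((∑ _l : Fin q, ∑ i, (y i)^2) - 2 * (∑ l, ∑ i, y i * v l i)
                + ∑ l, ∑ i, (v l i)^2) + lam * ∑ l, ∑ j ∈ G l, |x j| := by
              rw [Finset.sum_add_distrib, ← Finset.mul_sum, ← Finset.mul_sum]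
              congr 2
              rw [Finset.sum_add_distrib, Finset.sum_sub_distrib, ← Finset.mul_sum]
          _ = _ := by rw [hconst, hcross, hquad]

end Aux

theorem lasso_group_decomposition (p m q : ℕ) (H : Matrix (Fin p) (Fin m) ℝ)
    (y : Fin p → ℝ) (lam : ℝ) (hlam : 0 < lam)
    (G : Fin q → Finset (Fin m))
    (hcover : ∀ j : Fin m, ∃ l : Fin q, j ∈ G l)
    (hdisj : ∀ l l' : Fin q, l ≠ l' → Disjoint (G l) (G l'))
    (horth : ∀ l l' : Fin q, l ≠ l' → ∀ i ∈ G l, ∀ j ∈ G l',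
      ∑ s, H s i * H s j = 0)
    (a : Fin m → ℝ) :
    (∀ b : Fin m → ℝ,
      (1/2) * ∑ i, (y i - H.mulVec a i)^2 + lam * ∑ j, |a j| ≤
      (1/2) * ∑ i, (y i - H.mulVec b i)^2 + lam * ∑ j, |b j|) ↔
    (∀ l : Fin q, ∀ b : Fin m → ℝ, (∀ j ∉ G l, b j = 0) →
      (1/2) * ∑ i, (y i - H.mulVec (restrictTo (G l) a) i)^2 + lam * ∑ j ∈ G l, |a j| ≤
      (1/2) * ∑ i, (y i - H.mulVec b i)^2 + lam * ∑ j ∈ G l, |b j|) := by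
  constructor
  · -- global minimizer → per-group minimizer
    intro hmin l b hb
    set b' : Fin m → ℝ := fun j => if j ∈ G l then b j else a j with hb'
    have hle := hmin b'
    have hA := key_decomp H y G hcover hdisj horth lam a
    have hB := key_decomp H y G hcover hdisj horth lam b'
    have hsum : ∑ l', ((1/2) * ∑ i, (y i - H.mulVec (restrictTo (G l') a) i)^2
        + lam * ∑ j ∈ G l', |a j|)
        ≤ ∑ l', ((1/2) * ∑ i, (y i - H.mulVec (restrictTo (G l') b') i)^2
        + lam * ∑ j ∈ G l', |b' j|) := by
      rw [← hA, ← hB]; linarith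
    -- terms for l' ≠ l agree
    have hagree : ∀ l' ∈ Finset.univ.erase l,
        ((1/2) * ∑ i, (y i - H.mulVec (restrictTo (G l') b') i)^2
          + lam * ∑ j ∈ G l', |b' j|)
        = ((1/2) * ∑ i, (y i - H.mulVec (restrictTo (G l') a) i)^2
          + lam * ∑ j ∈ G l', |a j|) := by
      intro l' hl'
      have hne : l' ≠ l := (Finset.mem_erase.mp hl').1
      have hres : restrictTo (G l') b' = restrictTo (G l') a := by
        funext j
        simp only [restrictTo, hb']
        by_cases hj : j ∈ G l'
        · have hjl : j ∉ G l := fun hjl =>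
            Finset.disjoint_left.mp (hdisj l' l hne) hj hjl
          simp [hj, hjl]
        · simp [hj]
      have habs : ∑ j ∈ G l', |b' j| = ∑ j ∈ G l', |a j| := by
        apply Finset.sum_congr rfl; intro j hj
        have hjl : j ∉ G l := fun hjl =>
          Finset.disjoint_left.mp (hdisj l' l hne) hj hjl
        simp [hb', hjl]
      rw [hres, habs]
    -- term at l for b' is the goal's RHS
    have hresl : restrictTo (G l) b' = b := by
      funext j
      simp only [restrictTo, hb']
      by_cases hj : j ∈ G l
      · simp [hj]
      · simp [hj, hb j hj]
    have habsl : ∑ j ∈ G l, |b' j| = ∑ j ∈ G l, |b j| := by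
      apply Finset.sum_congr rfl; intro j hj; simp [hb', hj]
    rw [← Finset.sum_erase_add _ _ (Finset.mem_univ l),
        ← Finset.sum_erase_add _ _ (Finset.mem_univ l),
        Finset.sum_congr rfl hagree] at hsum
    rw [hresl, habsl] at hsum
    linarith
  · -- per-group minimizer → global minimizer
    intro hmin b
    have hA := key_decomp H y G hcover hdisj horth lam a
    have hB := key_decomp H y G hcover hdisj horth lam b
    have hsum : ∑ l, ((1/2) * ∑ i, (y i - H.mulVec (restrictTo (G l) a) i)^2
        + lam * ∑ j ∈ G l, |a j|)
        ≤ ∑ l, ((1/2) * ∑ i, (y i - H.mulVec (restrictTo (G l) b) i)^2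
        + lam * ∑ j ∈ G l, |b j|) := by
      apply Finset.sum_le_sum
      intro l _
      have h := hmin l (restrictTo (G l) b) (fun j hj => by simp [restrictTo, hj])
      have habs : ∑ j ∈ G l, |restrictTo (G l) b j| = ∑ j ∈ G l, |b j| := by
        apply Finset.sum_congr rfl; intro j hj; simp [restrictTo, hj]
      rwa [habs] at h
    rw [← hA, ← hB] at hsum
    linarith
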